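/- Let u ≥ 2-√2 with u < 1, w > 0, and define ψ(x) = w·(1 - x(1-u)²/(2(1-ux))) for 0 ≤ x ≤ 1, ψ(x) = w·(u/2 + 1/(2x)) for 1 ≤ x ≤ 1/u, ψ(x) = w/x for x ≥ 1/u; and define ψ†(x) = w·(1 - x/4) for x ≤ 2 and ψ†(x) = w/x for x ≥ 2. Then ψ† is convex and ψ†(x) ≤ ψ(x) for all x ≥ 0. -/

import Mathlib

open Set

/-- ψ(x) = φ(1/x): the single-field GL-S value with detection probability `u` and field
weight `w`, as a function of the reciprocal resource ratio. -/
noncomputable def psi (u w x : ℝ) : ℝ :=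
  if x ≤ 1 then w * (1 - x * (1 - u) ^ 2 / (2 * (1 - u * x)))
  else if x ≤ 1 / u then w * (u / 2 + 1 / (2 * x))
  else w / x

/-- The claimed lower convex envelope of ψ in the regime u ≥ 2-√2. -/
noncomputable def psiDag (w x : ℝ) : ℝ :=
  if x ≤ 2 then w * (1 - x / 4) else w / x

/-! ψ† is the tangent line of `w / x` at `x = 2` glued to `w / x`, so it is differentiable on
all of `ℝ` with derivative `-w / (max x 2)²`, which is monotone. On `[0, 1]` and `[1, 1/u]` the
domination reduces to a polynomial inequality; in the middle range this is
`(x - (2 - u))² + 2 - (2 - u)² ≥ 0`, which is exactly where `u ≥ 2 - √2` enters. Beyond `1/u`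
both functions are bounded by, resp. equal to, `w / x`, the convex function whose tangent ψ† uses. -/

theorem HasDerivAt.ite_le {f g : ℝ → ℝ} {a f' : ℝ} (hf : HasDerivAt f f' a)
    (hg : HasDerivAt g f' a) (hfg : f a = g a) :
    HasDerivAt (fun x => if x ≤ a then f x else g x) f' a := by
  have hleft : HasDerivWithinAt (fun x => if x ≤ a then f x else g x) f' (Iic a) a :=
    hf.hasDerivWithinAt.congr (fun x hx => if_pos hx) (if_pos le_rfl)
  have hright : HasDerivWithinAt (fun x => if x ≤ a then f x else g x) f' (Ici a) a := by
    refine hg.hasDerivWithinAt.congr (fun x hx => ?_) (by simp [hfg])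
    rcases (mem_Ici.mp hx).eq_or_lt with rfl | hlt
    · simp [hfg]
    · simp [not_le.mpr hlt]
  simpa [Iic_union_Ici] using hleft.union hright

section psiDag

variable {w : ℝ}

theorem hasDerivAt_psiDag (w x : ℝ) : HasDerivAt (psiDag w) (-(w / max x 2 ^ 2)) x := by
  have hline : ∀ y, HasDerivAt (fun y : ℝ => w * (1 - y / 4)) (-(w / 4)) y := fun y =>
    ((((hasDerivAt_id y).div_const 4).const_sub 1).const_mul w).congr_deriv (by ring)
  have hhyp : ∀ y ≠ 0, HasDerivAt (fun y : ℝ => w / y) (-(w / y ^ 2)) y := fun y hy => by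
    simp only [div_eq_mul_inv]
    exact ((hasDerivAt_inv hy).const_mul w).congr_deriv (by ring)
  rcases lt_trichotomy x 2 with hx | rfl | hx
  · rw [max_eq_right hx.le]
    refine (hline x).congr_deriv (by norm_num) |>.congr_of_eventuallyEq ?_
    filter_upwards [Iio_mem_nhds hx] with y hy
    exact if_pos (le_of_lt hy)
  · rw [max_self, show (2 : ℝ) ^ 2 = 4 by norm_num]
    exact (hline 2).ite_le ((hhyp 2 two_ne_zero).congr_deriv (by norm_num)) (by ring)
  · rw [max_eq_left hx.le]
    refine (hhyp x (by positivity)).congr_of_eventuallyEq ?_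
    filter_upwards [Ioi_mem_nhds hx] with y hy
    exact if_neg (not_le.mpr hy)

theorem convexOn_psiDag (hw : 0 ≤ w) : ConvexOn ℝ univ (psiDag w) := by
  have hderiv : deriv (psiDag w) = fun x => -(w / max x 2 ^ 2) :=
    funext fun x => (hasDerivAt_psiDag w x).deriv
  refine Monotone.convexOn_univ_of_deriv (fun x => (hasDerivAt_psiDag w x).differentiableAt) ?_
  intro x y hxy
  rw [hderiv]
  dsimp only
  have h2 : (0 : ℝ) < max x 2 := lt_max_of_lt_right two_pos
  gcongr

theorem psiDag_le_div (hw : 0 ≤ w) {x : ℝ} (hx : 0 < x) : psiDag w x ≤ w / x := by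
  unfold psiDag
  split_ifs
  · have hsq : w / x - w * (1 - x / 4) = w * (x - 2) ^ 2 / (4 * x) := by field_simp; ring
    have hsq_nonneg : 0 ≤ w * (x - 2) ^ 2 / (4 * x) := by positivity
    linarith
  · exact le_rfl

end psiDag

section domination

variable {u w x : ℝ}

theorem psiDag_le_psi_of_le_one (hu : 1 / 2 ≤ u) (hu1 : u < 1) (hw : 0 ≤ w) (hx : 0 ≤ x)
    (hx1 : x ≤ 1) : psiDag w x ≤ psi u w x := by
  rw [psi, psiDag, if_pos (by linarith), if_pos hx1]
  have hux : 0 < 1 - u * x := by nlinarith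
  have key : x * (1 - u) ^ 2 / (2 * (1 - u * x)) ≤ x / 4 := by
    rw [div_le_iff₀ (by linarith)]
    -- `2 (1 - u)² ≤ 1 - u ≤ 1 - u x` since `u ≥ 1/2` and `x ≤ 1`
    nlinarith [mul_nonneg hx (mul_nonneg (by linarith : (0:ℝ) ≤ 1 - u) (by linarith : (0:ℝ) ≤ u - 1/2)),
      mul_nonneg hx (mul_nonneg (by linarith : (0:ℝ) ≤ u) (by linarith : (0:ℝ) ≤ 1 - x))]
  gcongr

theorem psiDag_le_psi_of_le_inv (hu : (2 - u) ^ 2 ≤ 2) (hw : 0 ≤ w)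
    (hx1 : 1 < x) (hxu : x ≤ 1 / u) : psiDag w x ≤ psi u w x := by
  have hu0 : 1 / 2 ≤ u := by nlinarith
  have hx2 : x ≤ 2 := hxu.trans ((div_le_iff₀ (by linarith)).mpr (by linarith))
  have hx0 : 0 < x := by linarith
  rw [psi, psiDag, if_pos hx2, if_neg (not_le.mpr hx1), if_pos hxu]
  have hgap : u / 2 + 1 / (2 * x) - (1 - x / 4) = (x ^ 2 - (4 - 2 * u) * x + 2) / (4 * x) := by
    field_simp; ring
  have hquad : 0 ≤ x ^ 2 - (4 - 2 * u) * x + 2 := by nlinarith [sq_nonneg (x - (2 - u))]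
  have hgap_nonneg : 0 ≤ (x ^ 2 - (4 - 2 * u) * x + 2) / (4 * x) := by positivity
  gcongr
  linarith

theorem psiDag_le_psi_of_inv_lt (hw : 0 ≤ w) (hx1 : 1 < x) (hxu : 1 / u < x) :
    psiDag w x ≤ psi u w x := by
  rw [psi, if_neg (not_le.mpr hx1), if_neg (not_le.mpr hxu)]
  exact psiDag_le_div hw (by linarith)

end domination

theorem stmt_15 (u w : ℝ) (hu : 2 - Real.sqrt 2 ≤ u) (hu1 : u < 1) (hw : 0 < w) :
    ConvexOn ℝ (Ici 0) (psiDag w) ∧ ∀ x : ℝ, 0 ≤ x → psiDag w x ≤ psi u w x := by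
  have hsqrt : Real.sqrt 2 ^ 2 = 2 := Real.sq_sqrt zero_le_two
  have hsqrt_le : Real.sqrt 2 ≤ 3 / 2 := by nlinarith [Real.sqrt_nonneg 2]
  have hu' : (2 - u) ^ 2 ≤ 2 := by nlinarith [Real.sqrt_nonneg 2]
  refine ⟨(convexOn_psiDag hw.le).subset (subset_univ _) (convex_Ici 0), fun x hx => ?_⟩
  rcases le_or_gt x 1 with hx1 | hx1
  · exact psiDag_le_psi_of_le_one (by linarith) hu1 hw.le hx hx1
  rcases le_or_gt x (1 / u) with hxu | hxu
  · exact psiDag_le_psi_of_le_inv hu' hw.le hx1 hxu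
  · exact psiDag_le_psi_of_inv_lt hw.le hx1 hxu
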